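/- arXiv:1803.06922 — 2 statements merged into one kernel-verified Lean document; each statement's English description precedes it below -/
import Mathlib

section
/- Let \Sigma be a d \times d positive definite matrix, b \in R^d \setminus (-\infty,0]^d, and let \tilde b be the unique solution of \Pi_\Sigma(b) with associated index set I. Then for every x \in R^d and every index set F \subseteq {1,...,d} containing I, x^T \Sigma^{-1} \tilde b = x_F^T (\Sigma_{FF})^{-1} \tilde b_F. -/
open MeasureTheory ProbabilityTheory Filter Matrix
open scoped Topology ENNReal

noncomputable section

/-- Submatrix of `A` keeping rows with indices in `I` and columns with indices in `J`. -/
def subM {ι : Type*} (A : Matrix ι ι ℝ) (I J : Finset ι) : Matrix ↥I ↥J ℝ :=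
  fun i j => A i j

/-- Subvector of `c` keeping the entries with indices in `I`. -/
def subV {ι : Type*} (c : ι → ℝ) (I : Finset ι) : ↥I → ℝ := fun i => c i

/-- Density of a centered Gaussian vector with covariance matrix `S`. -/
def gaussPDF {ι : Type*} [Fintype ι] [DecidableEq ι] (S : Matrix ι ι ℝ) (x : ι → ℝ) : ℝ :=
  (Real.sqrt ((2 * Real.pi) ^ Fintype.card ι * S.det))⁻¹ *
    Real.exp (-(x ⬝ᵥ S⁻¹.mulVec x) / 2)

/-- `X` is, under `P`, a centered Gaussian random vector with covariance matrix `S`. -/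
def IsCenteredGaussianRV {Ω ι : Type*} [MeasurableSpace Ω] [Fintype ι] [DecidableEq ι]
    (P : Measure Ω) (X : Ω → ι → ℝ) (S : Matrix ι ι ℝ) : Prop :=
  Measure.map X P =
    (volume : Measure (ι → ℝ)).withDensity fun x => ENNReal.ofReal (gaussPDF S x)

/-- `bt` is a solution of the quadratic programming problem `Π_A(c)`:
minimise `x ⬝ Σ⁻¹ x` under `x ≥ c`. -/
def IsQPSol {ι : Type*} [Fintype ι] [DecidableEq ι] (A : Matrix ι ι ℝ) (c bt : ι → ℝ) : Prop :=
  (∀ i, c i ≤ bt i) ∧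
    ∀ x : ι → ℝ, (∀ i, c i ≤ x i) → bt ⬝ᵥ A⁻¹.mulVec bt ≤ x ⬝ᵥ A⁻¹.mulVec x

/-- `I` is the index set determined by the quadratic programming problem `Π_A(c)`
with solution `bt`. -/
def IsQPIndex {ι : Type*} [Fintype ι] [DecidableEq ι] (A : Matrix ι ι ℝ)
    (c bt : ι → ℝ) (I : Finset ι) : Prop :=
  I.Nonempty ∧ (∀ i ∈ I, bt i = c i) ∧
    (∀ i : ↥I, 0 < (subM A I I)⁻¹.mulVec (subV c I) i) ∧
    ∀ j : ι, j ∉ I → bt j = (fun i : ↥I => A j i) ⬝ᵥ (subM A I I)⁻¹.mulVec (subV c I)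

/-- `Σ_{i₀,I} (Σ_{II})⁻¹ c_I`. -/
def rowDot {ι : Type*} [Fintype ι] [DecidableEq ι] (A : Matrix ι ι ℝ) (c : ι → ℝ)
    (I : Finset ι) (i0 : ι) : ℝ :=
  (fun i : ↥I => A i0 i) ⬝ᵥ (subM A I I)⁻¹.mulVec (subV c I)

/-- `c_I ⬝ (Σ_{II})⁻¹ e_{i₀}`. -/
def eDot {ι : Type*} [Fintype ι] [DecidableEq ι] (A : Matrix ι ι ℝ) (c : ι → ℝ)
    (I : Finset ι) (i0 : ι) : ℝ :=
  subV c I ⬝ᵥ (subM A I I)⁻¹.mulVec fun j : ↥I => if (j : ι) = i0 then 1 else 0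

/-- Schur complement `Σ_{I^cI^c} - Σ_{I^cI}(Σ_{II})⁻¹Σ_{II^c}`, the covariance matrix of the
conditional Gaussian distribution of `X_{I^c}` given `X_I`. -/
def schurC {ι : Type*} [Fintype ι] [DecidableEq ι] (A : Matrix ι ι ℝ) (I : Finset ι) :
    Matrix ↥Iᶜ ↥Iᶜ ℝ :=
  subM A Iᶜ Iᶜ - subM A Iᶜ I * (subM A I I)⁻¹ * subM A I Iᶜ

/-- The conditional law of `X_{I^c}` given `X_I = 0`. -/
def condNu {ι : Type*} [Fintype ι] [DecidableEq ι] (A : Matrix ι ι ℝ) (I : Finset ι) :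
    Measure (↥Iᶜ → ℝ) :=
  (volume : Measure (↥Iᶜ → ℝ)).withDensity fun y => ENNReal.ofReal (gaussPDF (schurC A I) y)

/-- Survival function `Ḡ(x) = P(X_{i₀} > x, X_{N*} > 0 | X_I = 0) / P(X_{N*} > 0 | X_I = 0)`. -/
def Gbar {ι : Type*} [Fintype ι] [DecidableEq ι] (A : Matrix ι ι ℝ) (I Nstar : Finset ι)
    (i0 : ι) (x : ℝ) : ℝ :=
  (condNu A I {y : ↥Iᶜ → ℝ | (∀ j : ↥Iᶜ, (j : ι) = i0 → x < y j) ∧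
      ∀ j : ↥Iᶜ, (j : ι) ∈ Nstar → 0 < y j}).toReal /
    (condNu A I {y : ↥Iᶜ → ℝ | ∀ j : ↥Iᶜ, (j : ι) ∈ Nstar → 0 < y j}).toReal

/-- `E[(Y - μ)₊]` where `Y` has survival function `Gbar A I Nstar i0`. -/
def condPlusMean {ι : Type*} [Fintype ι] [DecidableEq ι] (A : Matrix ι ι ℝ)
    (I Nstar : Finset ι) (i0 : ι) (μ : ℝ) : ℝ :=
  (∫ y in {y : ↥Iᶜ → ℝ | ∀ j : ↥Iᶜ, (j : ι) ∈ Nstar → 0 < y j},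
      max ((∑ j : ↥Iᶜ, if (j : ι) = i0 then y j else 0) - μ) 0 ∂(condNu A I)) /
    (condNu A I {y : ↥Iᶜ → ℝ | ∀ j : ↥Iᶜ, (j : ι) ∈ Nstar → 0 < y j}).toReal

/-- `E[Y]` where `Y` has survival function `Gbar A I Nstar i0`. -/
def condMean {ι : Type*} [Fintype ι] [DecidableEq ι] (A : Matrix ι ι ℝ)
    (I Nstar : Finset ι) (i0 : ι) : ℝ :=
  (∫ y in {y : ↥Iᶜ → ℝ | ∀ j : ↥Iᶜ, (j : ι) ∈ Nstar → 0 < y j},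
      (∑ j : ↥Iᶜ, if (j : ι) = i0 then y j else 0) ∂(condNu A I)) /
    (condNu A I {y : ↥Iᶜ → ℝ | ∀ j : ↥Iᶜ, (j : ι) ∈ Nstar → 0 < y j}).toReal

/-- The conditioning event `{X_2 > c_2 u, ..., X_d > c_d u}`. -/
def tailEvent {Ω : Type*} {d : ℕ} [NeZero d] (X : Ω → Fin d → ℝ) (c : Fin d → ℝ) (u : ℝ) :
    Set Ω := {ω | ∀ i : Fin d, i ≠ 0 → c i * u < X ω i}

/-- The marginal mean excess `E(c,u) = E[(X_1 - c_1 u - μ)₊ | X_2 > c_2 u, ..., X_d > c_d u]`. -/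
def mmeV {Ω : Type*} [MeasurableSpace Ω] {d : ℕ} [NeZero d] (P : Measure Ω)
    (X : Ω → Fin d → ℝ) (c : Fin d → ℝ) (μ u : ℝ) : ℝ :=
  (∫ ω in tailEvent X c u, max (X ω 0 - c 0 * u - μ) 0 ∂P) / (P (tailEvent X c u)).toReal

/-- The marginal expected shortfall `S(c,u) = E[X_1 | X_2 > c_2 u, ..., X_d > c_d u]`. -/
def mesV {Ω : Type*} [MeasurableSpace Ω] {d : ℕ} [NeZero d] (P : Measure Ω)
    (X : Ω → Fin d → ℝ) (c : Fin d → ℝ) (u : ℝ) : ℝ :=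
  (∫ ω in tailEvent X c u, X ω 0 ∂P) / (P (tailEvent X c u)).toReal

/-- The multivariate conditional tail expectation `M(c,u) = E[X_1 | X > c u]`. -/
def mcteV {Ω : Type*} [MeasurableSpace Ω] {d : ℕ} [NeZero d] (P : Measure Ω)
    (X : Ω → Fin d → ℝ) (c : Fin d → ℝ) (u : ℝ) : ℝ :=
  (∫ ω in {ω | ∀ i, c i * u < X ω i}, X ω 0 ∂P) / (P {ω | ∀ i, c i * u < X ω i}).toReal

/-- The index set `{2,...,d}` of the components of `X_{-1}`. -/
def offFirst (d : ℕ) [NeZero d] : Finset (Fin d) := Finset.univ.filter fun i => i ≠ 0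

/-!
The index-set conditions say that `b̃ = Σ w` for the vector `w` that equals `(Σ_II)⁻¹ b_I` on `I`
and vanishes off `I`. Hence `x^⊤Σ⁻¹b̃ = x ⬝ w`, and since `w` is supported in `F ⊇ I`, also
`Σ_FF w_F = b̃_F`, so that `x_F^⊤(Σ_FF)⁻¹b̃_F = x_F ⬝ w_F = x ⬝ w`.
-/

section SupportedVectors

variable {ι : Type*} [Fintype ι] {F : Finset ι} {w : ι → ℝ}

theorem dotProduct_eq_subV_dotProduct_subV (hw : ∀ i, i ∉ F → w i = 0) (x : ι → ℝ) :
    x ⬝ᵥ w = subV x F ⬝ᵥ subV w F := by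
  rw [dotProduct, ← Fintype.sum_subset fun i hi => by_contra fun hiF => hi (by simp [hw i hiF]),
    ← Finset.sum_coe_sort]
  rfl

theorem subM_mulVec_subV (hw : ∀ i, i ∉ F → w i = 0) (A : Matrix ι ι ℝ) (G : Finset ι) :
    subM A G F *ᵥ subV w F = subV (A *ᵥ w) G :=
  funext fun j => (dotProduct_eq_subV_dotProduct_subV hw (A j)).symm

theorem dotProduct_inv_mulVec_mulVec_eq_subM [DecidableEq ι] {A : Matrix ι ι ℝ}
    (hA : IsUnit A.det) (hF : IsUnit (subM A F F).det) (hw : ∀ i, i ∉ F → w i = 0)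
    (x : ι → ℝ) :
    x ⬝ᵥ A⁻¹ *ᵥ (A *ᵥ w) = subV x F ⬝ᵥ (subM A F F)⁻¹ *ᵥ subV (A *ᵥ w) F := by
  rw [← subM_mulVec_subV hw, mulVec_mulVec, mulVec_mulVec, nonsing_inv_mul _ hA,
    nonsing_inv_mul _ hF, one_mulVec, one_mulVec, dotProduct_eq_subV_dotProduct_subV hw]

end SupportedVectors

theorem Matrix.PosDef.isUnit_det_subM {ι : Type*} [Fintype ι] [DecidableEq ι]
    {A : Matrix ι ι ℝ} (hA : A.PosDef) (F : Finset ι) : IsUnit (subM A F F).det :=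
  (hA.submatrix Subtype.val_injective).det_pos.ne'.isUnit

theorem IsQPIndex.exists_support_subset_mulVec_eq {ι : Type*} [Fintype ι] [DecidableEq ι]
    {A : Matrix ι ι ℝ} {c bt : ι → ℝ} {I : Finset ι} (hI : IsQPIndex A c bt I)
    (hAI : IsUnit (subM A I I).det) : ∃ w : ι → ℝ, (∀ i, i ∉ I → w i = 0) ∧ A *ᵥ w = bt := by
  obtain ⟨-, hbtI, -, hbtIc⟩ := hI
  set v := (subM A I I)⁻¹ *ᵥ subV c I
  let w : ι → ℝ := Function.extend Subtype.val v 0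
  have hwI : subV w I = v := funext fun i => Subtype.val_injective.extend_apply v 0 i
  have hw : ∀ i, i ∉ I → w i = 0 := fun i hi =>
    Function.extend_apply' _ _ _ fun ⟨j, hj⟩ => hi (hj ▸ j.2)
  refine ⟨w, hw, funext fun j => ?_⟩
  rw [mulVec, dotProduct_eq_subV_dotProduct_subV hw, hwI]
  by_cases hj : j ∈ I
  · calc subV (A j) I ⬝ᵥ v = (subM A I I *ᵥ v) ⟨j, hj⟩ := rfl
      _ = c j := by rw [mulVec_mulVec, mul_nonsing_inv _ hAI, one_mulVec]; rfl
      _ = bt j := (hbtI j hj).symm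
  · exact (hbtIc j hj).symm

theorem quadratic_programming_projection_general
    (d : ℕ) (A : Matrix (Fin d) (Fin d) ℝ) (hA : A.PosDef)
    (b : Fin d → ℝ)
    (bt : Fin d → ℝ) (I : Finset (Fin d))
    (hI : IsQPIndex A b bt I) :
    ∀ x : Fin d → ℝ, ∀ F : Finset (Fin d), I ⊆ F →
      x ⬝ᵥ A⁻¹.mulVec bt = subV x F ⬝ᵥ (subM A F F)⁻¹.mulVec (subV bt F) := by
  intro x F hIF
  obtain ⟨w, hwI, rfl⟩ := hI.exists_support_subset_mulVec_eq (hA.isUnit_det_subM I)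
  exact dotProduct_inv_mulVec_mulVec_eq_subM hA.det_pos.ne'.isUnit (hA.isUnit_det_subM F)
    (fun i hi => hwI i fun h => hi (hIF h)) x

/-- Lemma 4.1, equation (eq:new): for the solution `b̃` of `Π_Σ(b)` with index set `I`,
for every `x ∈ ℝ^d` and every index set `F ⊇ I`,
`x^⊤Σ⁻¹b̃ = x_F^⊤(Σ_FF)⁻¹b̃_F`. -/
theorem quadratic_programming_projection
    (d : ℕ) (A : Matrix (Fin d) (Fin d) ℝ) (hA : A.PosDef)
    (b : Fin d → ℝ) (hb : ∃ i, 0 < b i)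
    (bt : Fin d → ℝ) (I : Finset (Fin d))
    (hsol : IsQPSol A b bt) (hI : IsQPIndex A b bt I) :
    ∀ x : Fin d → ℝ, ∀ F : Finset (Fin d), I ⊆ F →
      x ⬝ᵥ A⁻¹.mulVec bt = subV x F ⬝ᵥ (subM A F F)⁻¹.mulVec (subV bt F) :=
  quadratic_programming_projection_general d A hA b bt I hI
end
end

section
/- Let \Sigma be a d \times d positive definite matrix and b \in R^d \setminus (-\infty,0]^d. If for some non-empty index set I \subseteq {1,...,d} one has (\Sigma_{II})^{-1} b_I > 0_I componentwise and \Sigma_{I^c I}(\Sigma_{II})^{-1} b_I \ge b_{I^c}, then the vector \tilde b defined by \tilde b_I = b_I and \tilde b_{I^c} = \Sigma_{I^c I}(\Sigma_{II})^{-1} b_I is the (unique) solution of the quadratic programming problem \Pi_\Sigma(b): minimize x^T \Sigma^{-1} x subject to x \ge b componentwise. -/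
open MeasureTheory ProbabilityTheory Filter Matrix
open scoped Topology ENNReal

noncomputable section

/-! With `w` the vector `(Σ_II)⁻¹ b_I` extended by zero, `Σ w = b̃`, so `Σ⁻¹ b̃ = w` is a
nonnegative multiplier vanishing off `I`, and `I` lies in the set of active constraints
`b̃_i = b_i`: these are the KKT conditions of `Π_Σ(b)`.
They suffice because, with `Q = Σ⁻¹` positive definite,
`xᵀQx = b̃ᵀQb̃ + 2 (x - b̃) ⬝ w + (x - b̃)ᵀQ(x - b̃)` and `(x - b̃) ⬝ w ≥ 0` for feasible `x`;
the last term is positive unless `x = b̃`, which gives uniqueness. -/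

section ExtendByZero

variable {ι R : Type*} [DecidableEq ι] (I : Finset ι)

def extendByZero [Zero R] (v : I → R) : ι → R := fun j => if h : j ∈ I then v ⟨j, h⟩ else 0

variable {I}

@[simp]
lemma extendByZero_apply_coe [Zero R] (v : I → R) (i : I) : extendByZero I v i = v i := by
  simp [extendByZero]

lemma extendByZero_apply_of_notMem [Zero R] (v : I → R) {j : ι} (hj : j ∉ I) :
    extendByZero I v j = 0 := by
  simp [extendByZero, hj]

variable [Fintype ι] [NonUnitalNonAssocSemiring R]

lemma dotProduct_extendByZero (u : ι → R) (v : I → R) :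
    u ⬝ᵥ extendByZero I v = (fun i : I => u i) ⬝ᵥ v := by
  have hsupp : ∀ j ∉ I, u j * extendByZero I v j = 0 := fun j hj => by
    rw [extendByZero_apply_of_notMem v hj, mul_zero]
  simp only [dotProduct]
  rw [← Finset.sum_subset (Finset.subset_univ I) fun j _ hj => hsupp j hj,
    ← Finset.sum_coe_sort I]
  simp

lemma mulVec_extendByZero {κ : Type*} (M : Matrix κ ι R) (v : I → R) (k : κ) :
    (M *ᵥ extendByZero I v) k = (fun i : I => M k i) ⬝ᵥ v :=
  dotProduct_extendByZero _ v

end ExtendByZero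

lemma Matrix.IsSymm.dotProduct_mulVec_comm {ι R : Type*} [Fintype ι] [CommSemiring R]
    {M : Matrix ι ι R} (hM : M.IsSymm) (x y : ι → R) : x ⬝ᵥ M *ᵥ y = y ⬝ᵥ M *ᵥ x := by
  rw [dotProduct_mulVec, ← mulVec_transpose, hM.eq, dotProduct_comm]

lemma Matrix.PosDef.dotProduct_mulVec_lt_of_nonneg {ι : Type*} [Fintype ι]
    {M : Matrix ι ι ℝ} (hM : M.PosDef) {x y : ι → ℝ} (hxy : x ≠ y)
    (h : 0 ≤ (x - y) ⬝ᵥ M *ᵥ y) : y ⬝ᵥ M *ᵥ y < x ⬝ᵥ M *ᵥ x := by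
  have hsymm : M.IsSymm := isHermitian_iff_isSymm.mp hM.1
  have hpos : 0 < (x - y) ⬝ᵥ M *ᵥ (x - y) := by
    simpa using hM.dotProduct_mulVec_pos (sub_ne_zero.mpr hxy)
  have hexpand : x ⬝ᵥ M *ᵥ x
      = y ⬝ᵥ M *ᵥ y + 2 * ((x - y) ⬝ᵥ M *ᵥ y) + (x - y) ⬝ᵥ M *ᵥ (x - y) := by
    conv_lhs => rw [← add_sub_cancel y x]
    rw [add_dotProduct, mulVec_add, dotProduct_add, dotProduct_add,
      hsymm.dotProduct_mulVec_comm y (x - y)]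
    ring
  linarith

theorem isQPSol_unique_of_kkt {ι : Type*} [Fintype ι] [DecidableEq ι] {A : Matrix ι ι ℝ}
    (hA : A.PosDef) {c bt : ι → ℝ} (hfeas : ∀ i, c i ≤ bt i)
    (hdual : ∀ i, 0 ≤ (A⁻¹ *ᵥ bt) i) (hslack : ∀ i, c i < bt i → (A⁻¹ *ᵥ bt) i = 0) :
    IsQPSol A c bt ∧ ∀ x, IsQPSol A c x → x = bt := by
  have hlt : ∀ x, (∀ i, c i ≤ x i) → x ≠ bt →
      bt ⬝ᵥ A⁻¹ *ᵥ bt < x ⬝ᵥ A⁻¹ *ᵥ x := fun x hx hne => by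
    refine hA.inv.dotProduct_mulVec_lt_of_nonneg hne (Finset.sum_nonneg fun i _ => ?_)
    rcases (hfeas i).lt_or_eq with hi | hi
    · simp [hslack i hi]
    · exact mul_nonneg (by simpa [← hi] using hx i) (hdual i)
  refine ⟨⟨hfeas, fun x hx => ?_⟩, fun x ⟨hx, hmin⟩ => ?_⟩
  · rcases eq_or_ne x bt with rfl | hne
    · exact le_rfl
    · exact (hlt x hx hne).le
  · by_contra hne
    exact (hmin bt hfeas).not_gt (hlt x hx hne)

lemma mulVec_extendByZero_inv_subM_mulVec_of_mem {ι : Type*} [Fintype ι] [DecidableEq ι]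
    {A : Matrix ι ι ℝ} {I : Finset ι} (hI : IsUnit (subM A I I).det) (c : ι → ℝ)
    {j : ι} (hj : j ∈ I) : (A *ᵥ extendByZero I ((subM A I I)⁻¹ *ᵥ subV c I)) j = c j := by
  rw [mulVec_extendByZero]
  change (subM A I I *ᵥ ((subM A I I)⁻¹ *ᵥ subV c I)) ⟨j, hj⟩ = c j
  rw [mulVec_mulVec, mul_nonsing_inv _ hI, one_mulVec]
  rfl

theorem quadratic_programming_converse_general
    (d : ℕ) (A : Matrix (Fin d) (Fin d) ℝ) (hA : A.PosDef)
    (b : Fin d → ℝ)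
    (I : Finset (Fin d))
    (hpos : ∀ i : ↥I, 0 < (subM A I I)⁻¹.mulVec (subV b I) i)
    (hge : ∀ j, j ∉ I →
      b j ≤ (fun i : ↥I => A j i) ⬝ᵥ (subM A I I)⁻¹.mulVec (subV b I)) :
    ∀ bt : Fin d → ℝ, (∀ i ∈ I, bt i = b i) →
      (∀ j, j ∉ I → bt j = (fun i : ↥I => A j i) ⬝ᵥ (subM A I I)⁻¹.mulVec (subV b I)) →
      IsQPSol A b bt ∧ ∀ x : Fin d → ℝ, IsQPSol A b x → x = bt := by
  intro bt hbtI hbtIc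
  have hAI : (subM A I I).PosDef := hA.submatrix Subtype.val_injective
  set w := extendByZero I ((subM A I I)⁻¹ *ᵥ subV b I)
  have hAw : A *ᵥ w = bt := funext fun j => by
    by_cases hj : j ∈ I
    · rw [mulVec_extendByZero_inv_subM_mulVec_of_mem hAI.det_pos.ne'.isUnit b hj, hbtI j hj]
    · rw [mulVec_extendByZero, hbtIc j hj]
  have hdual : A⁻¹ *ᵥ bt = w := by
    let := hA.isUnit.invertible
    exact inv_mulVec_eq_vec hAw.symm
  refine isQPSol_unique_of_kkt hA (fun j => ?_) (fun j => ?_) (fun j hj => ?_)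
  · by_cases hj : j ∈ I
    · rw [hbtI j hj]
    · rw [hbtIc j hj]; exact hge j hj
  · rw [hdual]
    by_cases hj : j ∈ I
    · exact (extendByZero_apply_coe _ ⟨j, hj⟩).trans_ge (hpos ⟨j, hj⟩).le
    · exact (extendByZero_apply_of_notMem _ hj).ge
  · have hjI : j ∉ I := fun hjI => hj.ne (hbtI j hjI).symm
    rw [hdual]
    exact extendByZero_apply_of_notMem _ hjI

/-- Lemma 4.1 (converse): if for a non-empty index set `I` one has `(Σ_II)⁻¹b_I > 0`
componentwise and `Σ_{I^cI}(Σ_II)⁻¹b_I ≥ b_{I^c}`, then the vector `b̃` with `b̃_I = b_I`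
and `b̃_{I^c} = Σ_{I^cI}(Σ_II)⁻¹b_I` is the unique solution of `Π_Σ(b)`. -/
theorem quadratic_programming_converse
    (d : ℕ) (A : Matrix (Fin d) (Fin d) ℝ) (hA : A.PosDef)
    (b : Fin d → ℝ) (hb : ∃ i, 0 < b i)
    (I : Finset (Fin d)) (hIne : I.Nonempty)
    (hpos : ∀ i : ↥I, 0 < (subM A I I)⁻¹.mulVec (subV b I) i)
    (hge : ∀ j, j ∉ I →
      b j ≤ (fun i : ↥I => A j i) ⬝ᵥ (subM A I I)⁻¹.mulVec (subV b I)) :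
    ∀ bt : Fin d → ℝ, (∀ i ∈ I, bt i = b i) →
      (∀ j, j ∉ I → bt j = (fun i : ↥I => A j i) ⬝ᵥ (subM A I I)⁻¹.mulVec (subV b I)) →
      IsQPSol A b bt ∧ ∀ x : Fin d → ℝ, IsQPSol A b x → x = bt :=
  quadratic_programming_converse_general d A hA b I hpos hge
end
end
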